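/- There exists a function ζ : Λ → ℚ(p,q) with all values nonzero such that for all μ ∈ Λ: ζ(μ + α_i) = −q^{(α_i − α_{−i}, μ + α_i)}·ζ(μ) and ζ(μ + α_{−i}) = −q^{(α_{−i}, μ + α_{−i}) − (α_i, μ)}·ζ(μ) for all i ∈ {3/2, 5/2, …, r−1/2}, ζ(μ + α_{1/2}) = −p·q^{(α_{1/2} − α_{−1/2}, μ + α_{1/2}) − 1}·ζ(μ), and ζ(μ + α_{−1/2}) = −p^{−1}·q^{(α_{−1/2}, μ + α_{−1/2}) − (α_{1/2}, μ) + 1}·ζ(μ), and such that ζ(ε_{−r}) = 1. Moreover, every such ζ satisfies ζ(ε_{−i}) = (−q)^{−r+i} for all i ∈ {−r, …, r} with i ≠ 0, and ζ(ε_0) = p·(−q)^{−r}. -/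

import Mathlib

open scoped BigOperators

attribute [local instance] Classical.propDecidable

noncomputable section

/-- The field `ℚ(p,q)` of rational functions in two indeterminates over `ℚ`. -/
abbrev K2 : Type := FractionRing (MvPolynomial (Fin 2) ℚ)

/-- The indeterminate `p`. -/
noncomputable def pp : K2 := algebraMap (MvPolynomial (Fin 2) ℚ) K2 (MvPolynomial.X 0)

/-- The indeterminate `q`. -/
noncomputable def qq : K2 := algebraMap (MvPolynomial (Fin 2) ℚ) K2 (MvPolynomial.X 1)

/-- The index set `I = {-r, -r+1, ..., r}` of integers, as a subtype of `ℚ`. -/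
def IIdx (r : ℕ) : Type := {a : ℚ // ∃ k : ℤ, -(r : ℤ) ≤ k ∧ k ≤ r ∧ a = (k : ℚ)}

instance (r : ℕ) : DecidableEq (IIdx r) := fun a b =>
  decidable_of_iff (a.1 = b.1) Subtype.ext_iff.symm

/-- Negation on the index set. -/
def IIdx.neg {r : ℕ} (a : IIdx r) : IIdx r :=
  ⟨-a.1, by
    obtain ⟨k, h1, h2, h3⟩ := a.2
    exact ⟨-k, by omega, by omega, by rw [h3]; push_cast; ring⟩⟩

/-- Interpret a rational number as an element of the index set (junk value if out of range). -/
def toII (r : ℕ) (a : ℚ) : IIdx r :=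
  if h : ∃ k : ℤ, -(r : ℤ) ≤ k ∧ k ≤ r ∧ a = (k : ℚ) then ⟨a, h⟩
  else ⟨0, ⟨0, by omega, by omega, by norm_num⟩⟩

/-- The set of indices `{1/2, 3/2, …, r-1/2}`. -/
def Ijset (r : ℕ) : Set ℚ := {i | ∃ k : ℕ, k + 1 ≤ r ∧ i = (k : ℚ) + 1/2}

/-- The weight lattice `Λ`, the free abelian group on the symbols `ε_a`, `a ∈ {-r, …, r}`. -/
abbrev Lam (r : ℕ) : Type := IIdx r →₀ ℤ

/-- The symmetric bilinear form on `Λ` with `(ε_a, ε_b) = δ_{a,b}`. -/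
def bilin {r : ℕ} (x y : Lam r) : ℤ := x.sum (fun a n => n * y a)

/-- The basis element `ε_a` of `Λ` (for a rational label `a`). -/
def epsv (r : ℕ) (a : ℚ) : Lam r := Finsupp.single (toII r a) 1

/-- The simple root `α_i = ε_{i-1/2} - ε_{i+1/2}` (for a half-integer label `i`). -/
def alR (r : ℕ) (i : ℚ) : Lam r := epsv r (i - 1/2) - epsv r (i + 1/2)

/-- The defining conditions on the function `ζ : Λ → ℚ(p,q)` (odd case). -/
def zetaCond (r : ℕ) (ζ : Lam r → K2) : Prop :=
  (∀ μ : Lam r, ζ μ ≠ 0) ∧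
  (∀ μ : Lam r, ∀ i : ℚ, i ∈ Ijset r → i ≠ 1/2 →
    ζ (μ + alR r i) = -(qq ^ (bilin (alR r i - alR r (-i)) (μ + alR r i))) * ζ μ ∧
    ζ (μ + alR r (-i)) = -(qq ^ (bilin (alR r (-i)) (μ + alR r (-i)) - bilin (alR r i) μ)) * ζ μ) ∧
  (∀ μ : Lam r,
    ζ (μ + alR r (1/2))
      = -pp * qq ^ (bilin (alR r (1/2) - alR r (-(1/2))) (μ + alR r (1/2)) - 1) * ζ μ) ∧
  (∀ μ : Lam r,
    ζ (μ + alR r (-(1/2)))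
      = -pp⁻¹ * qq ^ (bilin (alR r (-(1/2))) (μ + alR r (-(1/2))) - bilin (alR r (1/2)) μ + 1)
          * ζ μ)

/-!
Let `σ` be the involution `ε_a ↦ ε_{-a}` of `Λ` and put
`Q(μ) = ((μ, μ) + (σμ, μ) + (c, μ)) / 2` with `c_a = -1 - 2a` for `a ≠ 0` and `c_0 = -2`.
The parities of the `c_a` make `Q` integer valued, and `Q(μ + ν) = Q(μ) + Q(ν) + (ν + σν, μ)`.
Hence `ζ(μ) = (-1)^(Σ_a a μ_a + r) p^(μ_0) q^(Q(μ) - r)` changes under `μ ↦ μ + α_i` by the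
factor `-p^(⋯) q^(Q(α_i) + (α_i + σα_i, μ))`, and since `α_{-i} = -σα_i` the recursions reduce
to the values `Q(α_i) = 2` for `i ≠ -1/2` and `Q(α_{-1/2}) = 3`, which is how `c` was chosen.

Conversely the recursions prescribe `ζ(μ + α_i) / ζ(μ)` for every `i`, so two solutions have a
constant ratio along `ε_{-r}, ε_{-r+1}, …, ε_r`, consecutive terms differing by a simple root.
With the normalisation at `ε_{-r}`, every solution agrees with the explicit one on all `ε_m`.
-/

section

variable {r : ℕ}

namespace IIdx

lemma neg_involutive : Function.Involutive (IIdx.neg (r := r)) :=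
  fun a => Subtype.ext (neg_neg a.1)

lemma neg_eq_self_iff {a : IIdx r} : a.neg = a ↔ a.1 = 0 :=
  Subtype.ext_iff.trans neg_eq_self

end IIdx

lemma val_toII_of_mem {x : ℚ} (h : ∃ k : ℤ, -(r : ℤ) ≤ k ∧ k ≤ r ∧ x = k) : (toII r x).1 = x :=
  congrArg Subtype.val (dif_pos h : toII r x = ⟨x, h⟩)

lemma val_toII_of_not_mem {x : ℚ} (h : ¬∃ k : ℤ, -(r : ℤ) ≤ k ∧ k ≤ r ∧ x = k) :
    (toII r x).1 = 0 :=
  congrArg Subtype.val (dif_neg h : toII r x = ⟨0, ⟨0, by omega, by omega, by norm_num⟩⟩)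

lemma val_toII_intCast {m : ℤ} (h₁ : -(r : ℤ) ≤ m) (h₂ : m ≤ r) : (toII r m).1 = m :=
  val_toII_of_mem ⟨m, h₁, h₂, rfl⟩

lemma toII_intCast_inj {m n : ℤ} (hm₁ : -(r : ℤ) ≤ m) (hm₂ : m ≤ r) (hn₁ : -(r : ℤ) ≤ n)
    (hn₂ : n ≤ r) : toII r m = toII r n ↔ m = n := by
  refine ⟨fun h => ?_, fun h => h ▸ rfl⟩
  have := congrArg Subtype.val h
  rwa [val_toII_intCast hm₁ hm₂, val_toII_intCast hn₁ hn₂, Int.cast_inj] at this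

lemma toII_neg (x : ℚ) : toII r (-x) = (toII r x).neg := by
  apply Subtype.ext
  change (toII r (-x)).1 = -(toII r x).1
  by_cases hx : ∃ k : ℤ, -(r : ℤ) ≤ k ∧ k ≤ r ∧ x = k
  · obtain ⟨k, h₁, h₂, rfl⟩ := hx
    rw [val_toII_of_mem ⟨-k, by omega, by omega, by push_cast; rfl⟩, val_toII_intCast h₁ h₂]
  · have hnx : ¬∃ k : ℤ, -(r : ℤ) ≤ k ∧ k ≤ r ∧ -x = k := fun ⟨k, h₁, h₂, hk⟩ =>
      hx ⟨-k, by omega, by omega, by rw [← neg_neg x, hk, Int.cast_neg]⟩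
    rw [val_toII_of_not_mem hx, val_toII_of_not_mem hnx, neg_zero]

lemma bilin_eq_linearCombination (x y : Lam r) :
    bilin x y = Finsupp.linearCombination ℤ y x := by
  simp [bilin, Finsupp.linearCombination_apply]

lemma bilin_comm (x y : Lam r) : bilin x y = bilin y x := by
  have hsum : ∀ (x y : Lam r) (s : Finset (IIdx r)), x.support ⊆ s →
      bilin x y = ∑ a ∈ s, x a * y a :=
    fun x y _ hs => Finsupp.sum_of_support_subset x hs _ fun _ _ => zero_mul _
  rw [hsum x y _ Finset.subset_union_left, hsum y x _ Finset.subset_union_right]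
  exact Finset.sum_congr rfl fun _ _ => mul_comm _ _

lemma bilin_add_left (x x' y : Lam r) : bilin (x + x') y = bilin x y + bilin x' y := by
  simp only [bilin_eq_linearCombination, map_add]

lemma bilin_neg_left (x y : Lam r) : bilin (-x) y = -bilin x y := by
  simp only [bilin_eq_linearCombination, map_neg]

lemma bilin_sub_left (x x' y : Lam r) : bilin (x - x') y = bilin x y - bilin x' y := by
  simp only [bilin_eq_linearCombination, map_sub]

lemma bilin_add_right (x y y' : Lam r) : bilin x (y + y') = bilin x y + bilin x y' := by
  rw [bilin_comm, bilin_add_left, bilin_comm y, bilin_comm y']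

lemma bilin_sub_right (x y y' : Lam r) : bilin x (y - y') = bilin x y - bilin x y' := by
  rw [bilin_comm, bilin_sub_left, bilin_comm y, bilin_comm y']

lemma bilin_single_left (a : IIdx r) (n : ℤ) (y : Lam r) :
    bilin (Finsupp.single a n) y = n * y a :=
  Finsupp.sum_single_index (zero_mul _)

lemma bilin_epsv_epsv {m n : ℤ} (hm₁ : -(r : ℤ) ≤ m) (hm₂ : m ≤ r) (hn₁ : -(r : ℤ) ≤ n)
    (hn₂ : n ≤ r) : bilin (epsv r m) (epsv r n) = if m = n then 1 else 0 := by
  rw [epsv, bilin_single_left, one_mul, epsv, Finsupp.single_apply]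
  exact if_congr ((toII_intCast_inj hn₁ hn₂ hm₁ hm₂).trans eq_comm) rfl rfl

def negIndex (r : ℕ) : Lam r ≃+ Lam r :=
  Finsupp.domCongr (Function.Involutive.toPerm _ IIdx.neg_involutive)

lemma negIndex_single (a : IIdx r) (n : ℤ) :
    negIndex r (Finsupp.single a n) = Finsupp.single a.neg n := by
  simp [negIndex, Finsupp.equivMapDomain_single]

lemma negIndex_apply (μ : Lam r) (a : IIdx r) : negIndex r μ a = μ a.neg := by
  simp [negIndex, Finsupp.equivMapDomain_apply]

lemma negIndex_epsv (x : ℚ) : negIndex r (epsv r x) = epsv r (-x) := by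
  rw [epsv, negIndex_single, epsv, toII_neg]

lemma bilin_negIndex_comm (x y : Lam r) : bilin (negIndex r x) y = bilin (negIndex r y) x := by
  induction x using Finsupp.induction_linear with
  | zero => simp [bilin]
  | add f g hf hg => rw [map_add, bilin_add_left, hf, hg, bilin_add_right]
  | single a n =>
    rw [negIndex_single, bilin_single_left, bilin_comm, bilin_single_left, negIndex_apply]

def labelWeight (r : ℕ) (g : ℚ → ℤ) : Lam r →ₗ[ℤ] ℤ :=
  Finsupp.linearCombination ℤ fun a => g a.1

lemma labelWeight_single (g : ℚ → ℤ) (a : IIdx r) (n : ℤ) :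
    labelWeight r g (Finsupp.single a n) = n * g a.1 := by
  simp [labelWeight]

lemma labelWeight_epsv (g : ℚ → ℤ) {m : ℤ} (h₁ : -(r : ℤ) ≤ m) (h₂ : m ≤ r) :
    labelWeight r g (epsv r m) = g m := by
  rw [epsv, labelWeight_single, one_mul, val_toII_intCast h₁ h₂]

def linCoeff (x : ℚ) : ℤ := if x = 0 then -2 else -1 - 2 * ⌊x⌋

def twiceQExp (μ : Lam r) : ℤ :=
  bilin μ μ + bilin (negIndex r μ) μ + labelWeight r linCoeff μ

lemma twiceQExp_add (μ ν : Lam r) :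
    twiceQExp (μ + ν) = twiceQExp μ + twiceQExp ν + 2 * bilin (ν + negIndex r ν) μ := by
  simp only [twiceQExp, map_add, bilin_add_left, bilin_add_right]
  rw [bilin_comm μ ν, bilin_negIndex_comm μ ν]
  ring

lemma even_twiceQExp (μ : Lam r) : Even (twiceQExp μ) := by
  induction μ using Finsupp.induction_linear with
  | zero => simp [twiceQExp, bilin]
  | add μ ν hμ hν =>
    rw [twiceQExp_add]
    exact (hμ.add hν).add (even_two_mul _)
  | single a n =>
    have hself : a = a.neg ↔ a.1 = 0 := eq_comm.trans IIdx.neg_eq_self_iff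
    rw [twiceQExp, negIndex_single, bilin_single_left, bilin_single_left, labelWeight_single,
      Finsupp.single_apply, Finsupp.single_apply, if_pos rfl, linCoeff]
    by_cases h : a.1 = 0
    · rw [if_pos (hself.mpr h), if_pos h]
      exact ⟨n * n - n, by ring⟩
    · rw [if_neg (mt hself.mp h), if_neg h]
      obtain ⟨k, hk⟩ := Int.even_mul_pred_self n
      exact ⟨k - n * ⌊a.1⌋, by linear_combination hk⟩

def qExp (μ : Lam r) : ℤ := twiceQExp μ / 2

lemma qExp_add (μ ν : Lam r) : qExp (μ + ν) = qExp μ + qExp ν + bilin (ν + negIndex r ν) μ := by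
  have h := twiceQExp_add μ ν
  have hμ := Int.two_mul_ediv_two_of_even (even_twiceQExp μ)
  have hν := Int.two_mul_ediv_two_of_even (even_twiceQExp ν)
  have hμν := Int.two_mul_ediv_two_of_even (even_twiceQExp (μ + ν))
  simp only [qExp]
  omega

lemma pp_ne_zero : pp ≠ 0 :=
  (IsFractionRing.to_map_ne_zero_of_mem_nonZeroDivisors
    (mem_nonZeroDivisors_of_ne_zero (MvPolynomial.X_ne_zero 0)))

lemma qq_ne_zero : qq ≠ 0 :=
  (IsFractionRing.to_map_ne_zero_of_mem_nonZeroDivisors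
    (mem_nonZeroDivisors_of_ne_zero (MvPolynomial.X_ne_zero 1)))

def zeta (r : ℕ) (μ : Lam r) : K2 :=
  (-1) ^ (labelWeight r Int.floor μ + r) * pp ^ labelWeight r (Pi.single 0 1) μ *
    qq ^ (qExp μ - r)

lemma zeta_ne_zero (μ : Lam r) : zeta r μ ≠ 0 := by
  simp [zeta, zpow_ne_zero, pp_ne_zero, qq_ne_zero]

lemma zeta_add (μ ν : Lam r) :
    zeta r (μ + ν) = (-1) ^ labelWeight r Int.floor ν * pp ^ labelWeight r (Pi.single 0 1) ν *
      qq ^ (qExp ν + bilin (ν + negIndex r ν) μ) * zeta r μ := by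
  have h₁ : (-1 : K2) ≠ 0 := by norm_num
  simp only [zeta, map_add, qExp_add, zpow_add₀ h₁, zpow_add₀ pp_ne_zero, zpow_add₀ qq_ne_zero,
    zpow_sub₀ qq_ne_zero]
  ring

lemma alR_intCast_add_half (u : ℤ) : alR r (u + 1 / 2) = epsv r u - epsv r ((u + 1 : ℤ) : ℚ) := by
  rw [alR, add_sub_cancel_right, add_assoc]
  norm_num

lemma alR_neg (i : ℚ) : alR r (-i) = -negIndex r (alR r i) := by
  rw [alR, alR, map_sub, negIndex_epsv, negIndex_epsv, neg_sub]
  congr 2 <;> ring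

section SimpleRoot

variable {u : ℤ}

lemma labelWeight_alR (g : ℚ → ℤ) (h₁ : -(r : ℤ) ≤ u) (h₂ : u + 1 ≤ r) :
    labelWeight r g (alR r (u + 1 / 2)) = g u - g ((u + 1 : ℤ) : ℚ) := by
  rw [alR_intCast_add_half, map_sub, labelWeight_epsv g h₁ (by omega),
    labelWeight_epsv g (by omega) h₂]

lemma bilin_alR_self (h₁ : -(r : ℤ) ≤ u) (h₂ : u + 1 ≤ r) :
    bilin (alR r (u + 1 / 2)) (alR r (u + 1 / 2)) = 2 := by
  simp (disch := omega) only [alR_intCast_add_half, bilin_sub_left, bilin_sub_right,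
    bilin_epsv_epsv]
  split_ifs <;> omega

lemma bilin_negIndex_alR_self (h₁ : -(r : ℤ) ≤ u) (h₂ : u + 1 ≤ r) :
    bilin (negIndex r (alR r (u + 1 / 2))) (alR r (u + 1 / 2)) =
      if u = 0 ∨ u = -1 then 1 else 0 := by
  simp (disch := omega) only [alR_intCast_add_half, map_sub, negIndex_epsv, ← Int.cast_neg,
    bilin_sub_left, bilin_sub_right, bilin_epsv_epsv]
  split_ifs <;> omega

lemma qExp_alR (h₁ : -(r : ℤ) ≤ u) (h₂ : u + 1 ≤ r) :
    qExp (alR r (u + 1 / 2)) = if u = -1 then 3 else 2 := by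
  rw [qExp, twiceQExp, bilin_alR_self h₁ h₂, bilin_negIndex_alR_self h₁ h₂,
    labelWeight_alR _ h₁ h₂]
  simp only [linCoeff, Int.cast_eq_zero, Int.floor_intCast]
  split_ifs <;> omega

lemma zeta_add_alR (h₁ : -(r : ℤ) ≤ u) (h₂ : u + 1 ≤ r) (μ : Lam r) :
    zeta r (μ + alR r (u + 1 / 2)) =
      -(pp ^ ((if u = 0 then 1 else 0) - if u = -1 then 1 else 0 : ℤ) *
        qq ^ (bilin (alR r (u + 1 / 2)) (μ + alR r (u + 1 / 2)) +
          bilin (negIndex r (alR r (u + 1 / 2))) μ + if u = -1 then 1 else 0)) * zeta r μ := by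
  have hsign : labelWeight r Int.floor (alR r (u + 1 / 2)) = -1 := by
    rw [labelWeight_alR _ h₁ h₂, Int.floor_intCast, Int.floor_intCast]
    ring
  have hp : labelWeight r (Pi.single 0 1) (alR r (u + 1 / 2)) =
      ((if u = 0 then 1 else 0) - if u = -1 then 1 else 0) := by
    simp only [labelWeight_alR _ h₁ h₂, Pi.single_apply, Int.cast_eq_zero]
    split_ifs <;> omega
  have hq : qExp (alR r (u + 1 / 2)) + bilin (alR r (u + 1 / 2) + negIndex r (alR r (u + 1 / 2))) μ
      = bilin (alR r (u + 1 / 2)) (μ + alR r (u + 1 / 2)) +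
          bilin (negIndex r (alR r (u + 1 / 2))) μ + if u = -1 then 1 else 0 := by
    rw [qExp_alR h₁ h₂, bilin_add_left, bilin_add_right, bilin_alR_self h₁ h₂, bilin_comm _ μ]
    split_ifs <;> ring
  rw [zeta_add, hsign, hp, hq, zpow_neg_one, inv_neg_one]
  ring

end SimpleRoot

lemma alR_eq_neg_negIndex (i : ℚ) : alR r i = -negIndex r (alR r (-i)) := by
  rw [← alR_neg, neg_neg]

lemma zetaCond_zeta (hr : 1 ≤ r) : zetaCond r (zeta r) := by
  refine ⟨zeta_ne_zero, fun μ i hi hi' => ?_, fun μ => ?_, fun μ => ?_⟩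
  · obtain ⟨k, hk, rfl⟩ := hi
    have hk₀ : k ≠ 0 := by rintro rfl; norm_num at hi'
    have hpos : (k : ℚ) + 1 / 2 = ((k : ℤ) : ℚ) + 1 / 2 := by norm_cast
    have hneg : -((k : ℚ) + 1 / 2) = ((-(k : ℤ) - 1 : ℤ) : ℚ) + 1 / 2 := by push_cast; ring
    constructor
    · rw [alR_neg, sub_neg_eq_add, hpos, zeta_add_alR (by omega) (by omega), bilin_add_left,
        bilin_add_right (negIndex r _), bilin_negIndex_alR_self (by omega) (by omega)]
      simp [hk₀, show (k : ℤ) ≠ -1 by omega]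
    · rw [alR_eq_neg_negIndex ((k : ℚ) + 1 / 2), bilin_neg_left, sub_neg_eq_add, hneg,
        zeta_add_alR (by omega) (by omega)]
      simp [show -(k : ℤ) - 1 ≠ 0 by omega, show -(k : ℤ) - 1 ≠ -1 by omega]
  · have h : (1 / 2 : ℚ) = ((0 : ℤ) : ℚ) + 1 / 2 := by norm_num
    rw [alR_neg, sub_neg_eq_add, h, zeta_add_alR (by omega) (by omega), bilin_add_left,
      bilin_add_right (negIndex r _), bilin_negIndex_alR_self (by omega) (by omega)]
    simp [← add_assoc]
  · have h : -(1 / 2 : ℚ) = ((-1 : ℤ) : ℚ) + 1 / 2 := by norm_num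
    rw [alR_eq_neg_negIndex (1 / 2), bilin_neg_left, h, zeta_add_alR (by omega) (by omega)]
    simp

lemma qExp_epsv {m : ℤ} (h₁ : -(r : ℤ) ≤ m) (h₂ : m ≤ r) : qExp (epsv r m) = -m := by
  rw [qExp, twiceQExp, negIndex_epsv, ← Int.cast_neg, bilin_epsv_epsv h₁ h₂ h₁ h₂,
    bilin_epsv_epsv (by omega) (by omega) h₁ h₂, labelWeight_epsv _ h₁ h₂]
  simp only [linCoeff, Int.cast_eq_zero, Int.floor_intCast]
  split_ifs <;> omega

lemma zeta_epsv {m : ℤ} (h₁ : -(r : ℤ) ≤ m) (h₂ : m ≤ r) :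
    zeta r (epsv r m) = pp ^ (if m = 0 then 1 else 0 : ℤ) * (-qq) ^ (-(m + r)) := by
  have hsign : (-1 : K2) ^ (m + r) = (-1) ^ (-(m + r)) := by
    rw [zpow_neg, ← inv_zpow, inv_neg_one]
  rw [zeta, labelWeight_epsv _ h₁ h₂, labelWeight_epsv _ h₁ h₂, qExp_epsv h₁ h₂,
    Int.floor_intCast, hsign, ← neg_one_mul qq, mul_zpow, ← neg_add']
  simp only [Pi.single_apply, Int.cast_eq_zero]
  ring

lemma zetaCond.mul_add_alR_comm {ζ ζ' : Lam r → K2} (hζ : zetaCond r ζ) (hζ' : zetaCond r ζ')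
    {u : ℤ} (h₁ : -(r : ℤ) ≤ u) (h₂ : u + 1 ≤ r) (μ : Lam r) :
    ζ (μ + alR r (u + 1 / 2)) * ζ' μ = ζ μ * ζ' (μ + alR r (u + 1 / 2)) := by
  have hIjset : ∀ k : ℕ, 1 ≤ k → k + 1 ≤ r → (k : ℚ) + 1 / 2 ∈ Ijset r ∧ (k : ℚ) + 1 / 2 ≠ 1 / 2 :=
    fun k hk hkr => ⟨⟨k, hkr, rfl⟩, by norm_num; omega⟩
  rcases lt_trichotomy u 0 with hu | rfl | hu
  · obtain rfl | hu := eq_or_lt_of_le (show u ≤ -1 by omega)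
    · rw [show ((-1 : ℤ) : ℚ) + 1 / 2 = -(1 / 2) by norm_num, hζ.2.2.2, hζ'.2.2.2]
      ring
    · obtain ⟨k, rfl⟩ : ∃ k : ℕ, u = -(k : ℤ) - 1 := ⟨(-u - 1).toNat, by omega⟩
      obtain ⟨hk, hk'⟩ := hIjset k (by omega) (by omega)
      rw [show ((-(k : ℤ) - 1 : ℤ) : ℚ) + 1 / 2 = -((k : ℚ) + 1 / 2) by push_cast; ring,
        (hζ.2.1 μ _ hk hk').2, (hζ'.2.1 μ _ hk hk').2]
      ring
  · rw [show ((0 : ℤ) : ℚ) + 1 / 2 = 1 / 2 by norm_num, hζ.2.2.1, hζ'.2.2.1]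
    ring
  · lift u to ℕ using hu.le
    obtain ⟨hk, hk'⟩ := hIjset u (by omega) (by omega)
    rw [Int.cast_natCast, (hζ.2.1 μ _ hk hk').1, (hζ'.2.1 μ _ hk hk').1]
    ring

lemma zetaCond.eq_on_epsv {ζ ζ' : Lam r → K2} (hζ : zetaCond r ζ) (hζ' : zetaCond r ζ')
    (h : ζ (epsv r ((-r : ℤ) : ℚ)) = ζ' (epsv r ((-r : ℤ) : ℚ))) :
    ∀ m : ℤ, -(r : ℤ) ≤ m → m ≤ r → ζ (epsv r m) = ζ' (epsv r m) := by
  intro m h₁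
  induction m, h₁ using Int.leInduction with
  | base => exact fun _ => h
  | succ m hm ih =>
    intro h₂
    have step := hζ.mul_add_alR_comm hζ' hm (by omega) (epsv r ((m + 1 : ℤ) : ℚ))
    rw [alR_intCast_add_half, add_sub_cancel, ih (by omega), mul_comm] at step
    exact (mul_right_cancel₀ (hζ'.1 _) step).symm

end

/-- there exists a nowhere-vanishing `ζ : Λ → ℚ(p,q)` satisfying the recursions
with `ζ(ε_{-r}) = 1`; every such `ζ` satisfies `ζ(ε_{-i}) = (-q)^{-r+i}` for `i ≠ 0` and
`ζ(ε_0) = p (-q)^{-r}`. -/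
theorem zeta_exists_odd (r : ℕ) (hr : 1 ≤ r) :
    (∃ ζ : Lam r → K2, zetaCond r ζ ∧ ζ (epsv r (-(r : ℚ))) = 1) ∧
    (∀ ζ : Lam r → K2, zetaCond r ζ → ζ (epsv r (-(r : ℚ))) = 1 →
      (∀ i : ℤ, -(r : ℤ) ≤ i → i ≤ r → i ≠ 0 →
        ζ (epsv r (-(i : ℚ))) = (-qq) ^ (-(r : ℤ) + i)) ∧
      ζ (epsv r 0) = pp * (-qq) ^ (-(r : ℤ))) := by
  have hcast : -(r : ℚ) = ((-r : ℤ) : ℚ) := by push_cast; rfl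
  have hnorm : zeta r (epsv r (-(r : ℚ))) = 1 := by
    rw [hcast, zeta_epsv le_rfl (by omega), if_neg (by omega)]
    simp
  refine ⟨⟨zeta r, zetaCond_zeta hr, hnorm⟩, fun ζ hζ hζnorm => ?_⟩
  have heq := hζ.eq_on_epsv (zetaCond_zeta hr) (by rw [← hcast, hζnorm, hnorm])
  refine ⟨fun i hi₁ hi₂ hi₀ => ?_, ?_⟩
  · rw [← Int.cast_neg, heq _ (by omega) (by omega), zeta_epsv (by omega) (by omega),
      if_neg (by omega), zpow_zero, one_mul]
    congr 1
    ring
  · rw [← Int.cast_zero (R := ℚ), heq 0 (by omega) (by omega), zeta_epsv (by omega) (by omega),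
      if_pos rfl]
    simp
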